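/- Let α > 0 be real. Define ζ̃(k₁,...,k_r;α) := Σ_{0 ≤ m₁ < ··· < m_r} (Γ(m_r+α+1)/Γ(m_r+2α)) · 1/((m₁+α)^{k₁}···(m_r+α)^{k_r}) for an admissible index (positive integers with k_r ≥ 2). Then ζ̃(1,2,2;α) = ζ̃(2,3;α). -/

import Mathlib

/-!
Let `c(x, y) = Γ(x+α+1) Γ(y+α+1) / Γ(x+y+2α+1)`. From `Γ(s+1) = s Γ(s)`,
`c(x, y) - c(x+1, y) = (y+α) c(x+1, y) / (x+α+1)`, and since `c(x+k, y) → 0` this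
telescopes to `∑_{k ≥ 0} c(x+1+k, y) / (x+1+k+α) = c(x, y) / (y+α)`.

Consider the connected sums
`Z(k₁,…,k_r | l₁,…,l_s) = ∑ c(m_r, n_s) / (∏ (m_i+α)^{k_i} ∏ (n_j+α)^{l_j})`
over `0 ≤ m₁ < ⋯ < m_r` and `0 ≤ n₁ < ⋯ < n_s`, where an empty side contributes the index `-1`.
The identity above moves one power of a denominator from the last `m` to the last `n` or back.
As `c(m, -1) = Γ(α) Γ(m+α+1) / Γ(m+2α)`, we have `Γ(α) ζ̃(1,2,2) = Z(1,2,2 | ∅)` and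
`Γ(α) ζ̃(2,3) = Z(∅ | 2,3)`, and five moves give `Z(1,2,2 | ∅) = Z(1,2 | 2) = Z(∅ | 2,3)`.
All terms are nonnegative, so the rearrangements are done in `ℝ≥0∞`; the finiteness of
`ζ̃(2,3)` brings the identity back to `ℝ`.
-/

open Filter Topology Real
open scoped ENNReal

theorem hasSum_sub_succ_of_tendsto {d : ℕ → ℝ} {l : ℝ} (hd : Antitone d)
    (hl : Tendsto d atTop (𝓝 l)) : HasSum (fun k => d k - d (k + 1)) (d 0 - l) := by
  rw [hasSum_iff_tendsto_nat_of_nonneg fun k => sub_nonneg.2 (hd k.le_succ)]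
  simp only [Finset.sum_range_sub']
  exact tendsto_const_nhds.sub hl

theorem Antitone.tendsto_zero_of_not_summable {d u : ℕ → ℝ} (hd : Antitone d)
    (hd0 : ∀ k, 0 ≤ d k) (hu0 : ∀ k, 0 ≤ u k) (hu : ¬Summable u)
    (hstep : ∀ k, u k * d (k + 1) ≤ d k - d (k + 1)) : Tendsto d atTop (𝓝 0) := by
  have hbdd : BddBelow (Set.range d) := ⟨0, by rintro _ ⟨k, rfl⟩; exact hd0 k⟩
  have hlim := tendsto_atTop_ciInf hd hbdd
  have hl0 : 0 ≤ ⨅ k, d k := le_ciInf hd0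
  suffices hl : ⨅ k, d k = 0 by rwa [hl] at hlim
  by_contra hne
  have hlpos : 0 < ⨅ k, d k := lt_of_le_of_ne hl0 (Ne.symm hne)
  refine hu (((hasSum_sub_succ_of_tendsto hd hlim).summable.div_const (⨅ k, d k)).of_nonneg_of_le
      hu0 fun k => ?_)
  rw [le_div_iff₀ hlpos]
  exact (mul_le_mul_of_nonneg_left (ciInf_le hbdd (k + 1)) (hu0 k)).trans (hstep k)

theorem not_summable_inv_nat_add {c : ℝ} (hc : 0 < c) :
    ¬Summable fun k : ℕ => ((k : ℝ) + c)⁻¹ := by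
  have h := (Real.summable_one_div_nat_add_rpow c 1).not.2 (lt_irrefl 1)
  refine fun hs => h (hs.congr fun k => ?_)
  rw [Real.rpow_one, abs_of_pos (by positivity), one_div]

theorem summable_inv_nat_add_sq {c : ℝ} (hc : 0 < c) :
    Summable fun k : ℕ => (((k : ℝ) + c) ^ 2)⁻¹ := by
  refine ((Real.summable_one_div_nat_add_rpow c 2).2 one_lt_two).congr fun k => ?_
  rw [abs_of_pos (by positivity), one_div, Real.rpow_two]

theorem tsum_eq_toReal_tsum_ofReal {ι : Type*} {f : ι → ℝ} (hf : ∀ i, 0 ≤ f i) :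
    ∑' i, f i = (∑' i, ENNReal.ofReal (f i)).toReal := by
  rw [ENNReal.tsum_toReal_eq fun _ => ENNReal.ofReal_ne_top]
  exact tsum_congr fun i => (ENNReal.toReal_ofReal (hf i)).symm

theorem tsum_toReal_eq_of_ne_top {ι : Type*} {f : ι → ℝ≥0∞} (hf : ∑' i, f i ≠ ∞) :
    ∑' i, (f i).toReal = (∑' i, f i).toReal :=
  (ENNReal.tsum_toReal_eq fun i => ne_top_of_le_ne_top hf (ENNReal.le_tsum i)).symm

theorem tsum_tsum_eq_toReal {ι κ : Type*} {f : ι → κ → ℝ} (hf : ∀ i j, 0 ≤ f i j)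
    (hfin : ∑' i, ∑' j, ENNReal.ofReal (f i j) ≠ ∞) :
    ∑' i, ∑' j, f i j = (∑' i, ∑' j, ENNReal.ofReal (f i j)).toReal := by
  rw [← tsum_toReal_eq_of_ne_top hfin]
  exact tsum_congr fun i => tsum_eq_toReal_tsum_ofReal (hf i)

theorem tsum_tsum_tsum_eq_toReal {ι κ μ : Type*} {f : ι → κ → μ → ℝ}
    (hf : ∀ i j k, 0 ≤ f i j k) (hfin : ∑' i, ∑' j, ∑' k, ENNReal.ofReal (f i j k) ≠ ∞) :
    ∑' i, ∑' j, ∑' k, f i j k = (∑' i, ∑' j, ∑' k, ENNReal.ofReal (f i j k)).toReal := by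
  rw [← tsum_toReal_eq_of_ne_top hfin]
  exact tsum_congr fun i =>
    tsum_tsum_eq_toReal (hf i) (ne_top_of_le_ne_top hfin (ENNReal.le_tsum i))

theorem ENNReal.ofReal_inv_mul_ofReal {s : ℝ} (hs : 0 ≤ s) (c : ℝ) :
    ENNReal.ofReal s⁻¹ * ENNReal.ofReal c = ENNReal.ofReal (c / s) := by
  rw [← ENNReal.ofReal_mul (inv_nonneg.2 hs), inv_mul_eq_div]

theorem Real.Gamma_nat_add_div_Gamma_nat_add_le {a b : ℝ} (ha : 0 < a) (hab : a ≤ b) (n : ℕ) :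
    Gamma (n + a) / Gamma (n + b) ≤ Gamma a / Gamma b := by
  induction n with
  | zero => simp
  | succ n ih =>
    have hna : 0 < (n : ℝ) + a := by positivity
    have hnb : 0 < (n : ℝ) + b := by linarith
    rw [Nat.cast_succ, add_right_comm, add_right_comm _ 1 b, Gamma_add_one hna.ne',
      Gamma_add_one hnb.ne', mul_div_mul_comm]
    calc (n + a) / (n + b) * (Gamma (n + a) / Gamma (n + b))
        ≤ 1 * (Gamma (n + a) / Gamma (n + b)) := by
          gcongr
          exact div_le_one_of_le₀ (by linarith) hnb.le
      _ ≤ Gamma a / Gamma b := by rw [one_mul]; exact ih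

noncomputable def connector (α x y : ℝ) : ℝ :=
  Gamma (x + α + 1) * Gamma (y + α + 1) / Gamma (x + y + 2 * α + 1)

namespace connector

theorem comm (α x y : ℝ) : connector α x y = connector α y x := by
  rw [connector, connector, mul_comm, add_comm x y]

theorem neg_one_right (α x : ℝ) :
    connector α x (-1) = Gamma α * (Gamma (x + α + 1) / Gamma (x + 2 * α)) := by
  rw [connector, show -1 + α + 1 = α by ring, show x + -1 + 2 * α + 1 = x + 2 * α by ring]
  ring

variable {α : ℝ}

theorem pos {x y : ℝ} (hx : 0 < x + α + 1) (hy : 0 < y + α) : 0 < connector α x y := by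
  have : 0 < y + α + 1 := by linarith
  have : 0 < x + y + 2 * α + 1 := by linarith
  unfold connector
  positivity

theorem sub_add_one_left {x y : ℝ} (hx : 0 < x + α + 1) (hy : 0 < y + α) :
    connector α x y - connector α (x + 1) y =
      (y + α) * (connector α (x + 1) y / (x + α + 1)) := by
  have hxy : 0 < x + y + 2 * α + 1 := by linarith
  unfold connector
  rw [show x + 1 + α + 1 = x + α + 1 + 1 by ring,
    show x + 1 + y + 2 * α + 1 = x + y + 2 * α + 1 + 1 by ring,
    Gamma_add_one hx.ne', Gamma_add_one hxy.ne']
  have hD := (Gamma_pos_of_pos hxy).ne'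
  generalize Gamma (x + y + 2 * α + 1) = D at hD ⊢
  field_simp
  rw [one_sub_div (by linarith)]
  ring

theorem hasSum_div {x y : ℝ} (hx : 0 < x + α + 1) (hy : 0 < y + α) :
    HasSum (fun k : ℕ => connector α (x + 1 + k) y / (x + 1 + k + α))
      (connector α x y / (y + α)) := by
  set d : ℕ → ℝ := fun k => connector α (x + k) y
  have hdx : ∀ k : ℕ, 0 < x + 1 + k + α := fun k => by linarith [k.cast_nonneg (α := ℝ)]
  have hstep : ∀ k : ℕ,
      d k - d (k + 1) = (y + α) * (connector α (x + 1 + k) y / (x + 1 + k + α)) := by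
    intro k
    have h := sub_add_one_left (x := x + k) (by linarith [hdx k]) hy
    rw [show x + k + 1 = x + 1 + k by ring, show x + k + α + 1 = x + 1 + k + α by ring] at h
    simpa only [d, Nat.cast_succ, ← add_assoc, add_right_comm x _ 1] using h
  have hterm : ∀ k : ℕ, 0 ≤ connector α (x + 1 + k) y / (x + 1 + k + α) := fun k =>
    (div_pos (pos (by linarith [hdx k]) hy) (hdx k)).le
  have hd : Antitone d := antitone_nat_of_succ_le fun k => by
    rw [← sub_nonneg, hstep]
    exact mul_nonneg hy.le (hterm k)
  have hlim : Tendsto d atTop (𝓝 0) := by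
    refine hd.tendsto_zero_of_not_summable (u := fun k => (y + α) * (x + 1 + k + α)⁻¹)
      (fun k => (pos (by linarith [hdx k]) hy).le)
      (fun k => mul_nonneg hy.le (inv_nonneg.2 (hdx k).le)) ?_ fun k => (hstep k).ge.trans' ?_
    · rw [summable_mul_left_iff hy.ne']
      exact fun hs => not_summable_inv_nat_add (c := x + 1 + α) (by linarith [hdx 0])
        (hs.congr fun k => by ring_nf)
    · simp only [d, Nat.cast_succ, ← add_assoc, add_right_comm x _ 1]
      rw [mul_assoc, div_eq_inv_mul]
  have h := (hasSum_sub_succ_of_tendsto hd hlim).div_const (y + α)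
  simp only [hstep, mul_div_cancel_left₀ _ hy.ne'] at h
  simpa [d] using h

end connector

section Transport

variable {α : ℝ}

local notation "𝒞(" x ", " y ")" => ENNReal.ofReal (connector α x y)
local notation "𝓌(" x ")" => ENNReal.ofReal (x + α)⁻¹

theorem connector.tsum_mul_weight_mul {x y : ℝ} (K : ℝ≥0∞) (hx : 0 < x + α + 1)
    (hy : 0 < y + α) :
    ∑' k : ℕ, K * 𝓌(x + 1 + k) * 𝒞(x + 1 + k, y) = K * 𝓌(y) * 𝒞(x, y) := by
  have hk : ∀ k : ℕ, 0 < x + 1 + k + α := fun k => by linarith [k.cast_nonneg (α := ℝ)]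
  have h := connector.hasSum_div hx hy
  simp_rw [mul_assoc K, ENNReal.tsum_mul_left, ENNReal.ofReal_inv_mul_ofReal (hk _).le,
    ENNReal.ofReal_inv_mul_ofReal hy.le, ← h.tsum_eq]
  rw [ENNReal.ofReal_tsum_of_nonneg
    (fun k => (div_pos (connector.pos (by linarith [hk k]) hy) (hk k)).le) h.summable]

theorem connector.tsum_mul_weight_mul_right {x y : ℝ} (K : ℝ≥0∞) (hx : 0 < x + α)
    (hy : 0 < y + α + 1) :
    ∑' k : ℕ, K * 𝓌(y + 1 + k) * 𝒞(x, y + 1 + k) = K * 𝓌(x) * 𝒞(x, y) := by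
  simp only [connector.comm α x]
  exact connector.tsum_mul_weight_mul K hy hx

theorem connector.tsum_mul_weight_mul_of_neg_one {y : ℝ} (K : ℝ≥0∞) (hα : 0 < α)
    (hy : 0 < y + α) :
    ∑' k : ℕ, K * 𝓌(k) * 𝒞(k, y) = K * 𝓌(y) * 𝒞(-1, y) := by
  simpa using connector.tsum_mul_weight_mul K (x := -1) (by linarith) hy

theorem connector.tsum_mul_weight_mul_right_of_neg_one {x : ℝ} (K : ℝ≥0∞) (hα : 0 < α)
    (hx : 0 < x + α) :
    ∑' k : ℕ, K * 𝓌(k) * 𝒞(x, k) = K * 𝓌(x) * 𝒞(x, -1) := by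
  simpa using connector.tsum_mul_weight_mul_right K (y := -1) hx (by linarith)

/- The indices `m₁ < m₂ < m₃` are `a, a+1+b, a+1+b+1+c` and `n₁ < n₂` are `p, p+1+q`. In each step
the factors are ordered so that the weight being moved stands right before the connector. -/
theorem connectedSum_122_eq_12_2 (hα : 0 < α) :
    ∑' a : ℕ, ∑' b : ℕ, ∑' c : ℕ, 𝓌(a) * 𝓌(a + 1 + b) ^ 2 * 𝓌(a + 1 + b + 1 + c) ^ 2 *
        𝒞(a + 1 + b + 1 + c, -1) =
      ∑' a : ℕ, ∑' b : ℕ, ∑' p : ℕ, 𝓌(a) * 𝓌(a + 1 + b) ^ 2 * 𝓌(p) ^ 2 * 𝒞(a + 1 + b, p) :=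
  calc _ = ∑' a : ℕ, ∑' b : ℕ, ∑' c : ℕ, ∑' p : ℕ, 𝓌(a) * 𝓌(a + 1 + b) ^ 2 *
          𝓌(a + 1 + b + 1 + c) * 𝓌(p) * 𝒞(a + 1 + b + 1 + c, p) := by
        refine tsum_congr fun a => tsum_congr fun b => tsum_congr fun c => ?_
        rw [connector.tsum_mul_weight_mul_right_of_neg_one _ hα (by positivity)]
        ring
    _ = ∑' a : ℕ, ∑' b : ℕ, ∑' p : ℕ, ∑' c : ℕ, 𝓌(a) * 𝓌(a + 1 + b) ^ 2 * 𝓌(p) *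
          𝓌(a + 1 + b + 1 + c) * 𝒞(a + 1 + b + 1 + c, p) := by
        refine tsum_congr fun a => tsum_congr fun b => ?_
        rw [ENNReal.tsum_comm]
        exact tsum_congr fun p => tsum_congr fun c => by ring
    _ = _ := by
        refine tsum_congr fun a => tsum_congr fun b => tsum_congr fun p => ?_
        rw [connector.tsum_mul_weight_mul _ (by positivity) (by positivity)]
        ring

theorem connectedSum_12_2_eq_23 (hα : 0 < α) :
    ∑' a : ℕ, ∑' b : ℕ, ∑' p : ℕ, 𝓌(a) * 𝓌(a + 1 + b) ^ 2 * 𝓌(p) ^ 2 * 𝒞(a + 1 + b, p) =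
      ∑' p : ℕ, ∑' q : ℕ, 𝓌(p) ^ 2 * 𝓌(p + 1 + q) ^ 3 * 𝒞(-1, p + 1 + q) :=
  calc _ = ∑' a : ℕ, ∑' b : ℕ, ∑' p : ℕ, ∑' q : ℕ, 𝓌(a) * 𝓌(a + 1 + b) * 𝓌(p) ^ 2 *
          𝓌(p + 1 + q) * 𝒞(a + 1 + b, p + 1 + q) := by
        refine tsum_congr fun a => tsum_congr fun b => tsum_congr fun p => ?_
        rw [connector.tsum_mul_weight_mul_right _ (by positivity) (by positivity)]
        ring
    _ = ∑' a : ℕ, ∑' p : ℕ, ∑' q : ℕ, ∑' b : ℕ, 𝓌(a) * 𝓌(p) ^ 2 * 𝓌(p + 1 + q) *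
          𝓌(a + 1 + b) * 𝒞(a + 1 + b, p + 1 + q) := by
        refine tsum_congr fun a => ?_
        rw [ENNReal.tsum_comm]
        refine tsum_congr fun p => ?_
        rw [ENNReal.tsum_comm]
        exact tsum_congr fun q => tsum_congr fun b => by ring
    _ = ∑' a : ℕ, ∑' p : ℕ, ∑' q : ℕ, 𝓌(p) ^ 2 * 𝓌(p + 1 + q) ^ 2 * 𝓌(a) *
          𝒞(a, p + 1 + q) := by
        refine tsum_congr fun a => tsum_congr fun p => tsum_congr fun q => ?_
        rw [connector.tsum_mul_weight_mul _ (by positivity) (by positivity)]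
        ring
    _ = ∑' p : ℕ, ∑' q : ℕ, ∑' a : ℕ, 𝓌(p) ^ 2 * 𝓌(p + 1 + q) ^ 2 * 𝓌(a) *
          𝒞(a, p + 1 + q) :=
        ENNReal.tsum_comm.trans (tsum_congr fun p => ENNReal.tsum_comm)
    _ = _ := by
        refine tsum_congr fun p => tsum_congr fun q => ?_
        rw [connector.tsum_mul_weight_mul_of_neg_one _ hα (by positivity)]
        ring

noncomputable def zetaTilde122Term (α : ℝ) (a b c : ℕ) : ℝ :=
  Gamma (((a + b + c + 2 : ℕ) : ℝ) + α + 1) / Gamma (((a + b + c + 2 : ℕ) : ℝ) + 2 * α) /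
    (((a : ℝ) + α) * (((a + b + 1 : ℕ) : ℝ) + α) ^ 2 * (((a + b + c + 2 : ℕ) : ℝ) + α) ^ 2)

noncomputable def zetaTilde23Term (α : ℝ) (a b : ℕ) : ℝ :=
  Gamma (((a + b + 1 : ℕ) : ℝ) + α + 1) / Gamma (((a + b + 1 : ℕ) : ℝ) + 2 * α) /
    (((a : ℝ) + α) ^ 2 * (((a + b + 1 : ℕ) : ℝ) + α) ^ 3)

theorem ofReal_zetaTilde122Term (hα : 0 < α) (a b c : ℕ) :
    ENNReal.ofReal (zetaTilde122Term α a b c) = ENNReal.ofReal (Gamma α)⁻¹ *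
      (𝓌(a) * 𝓌(a + 1 + b) ^ 2 * 𝓌(a + 1 + b + 1 + c) ^ 2 * 𝒞(a + 1 + b + 1 + c, -1)) := by
  have hΓ := (Gamma_pos_of_pos hα).ne'
  rw [zetaTilde122Term, show ((a + b + c + 2 : ℕ) : ℝ) = a + 1 + b + 1 + c by push_cast; ring,
    show ((a + b + 1 : ℕ) : ℝ) = a + 1 + b by push_cast; ring, connector.neg_one_right]
  simp (disch := positivity) only [← ENNReal.ofReal_pow, ← ENNReal.ofReal_mul]
  congr 1
  field_simp

theorem ofReal_zetaTilde23Term (hα : 0 < α) (p q : ℕ) :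
    ENNReal.ofReal (zetaTilde23Term α p q) = ENNReal.ofReal (Gamma α)⁻¹ *
      (𝓌(p) ^ 2 * 𝓌(p + 1 + q) ^ 3 * 𝒞(-1, p + 1 + q)) := by
  have hΓ := (Gamma_pos_of_pos hα).ne'
  rw [zetaTilde23Term, show ((p + q + 1 : ℕ) : ℝ) = p + 1 + q by push_cast; ring,
    connector.comm, connector.neg_one_right]
  simp (disch := positivity) only [← ENNReal.ofReal_pow, ← ENNReal.ofReal_mul]
  congr 1
  field_simp

theorem tsum_ofReal_zetaTilde122Term (hα : 0 < α) :
    ∑' a : ℕ, ∑' b : ℕ, ∑' c : ℕ, ENNReal.ofReal (zetaTilde122Term α a b c) =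
      ∑' a : ℕ, ∑' b : ℕ, ENNReal.ofReal (zetaTilde23Term α a b) := by
  simp_rw [ofReal_zetaTilde122Term hα, ofReal_zetaTilde23Term hα, ENNReal.tsum_mul_left]
  rw [connectedSum_122_eq_12_2 hα, connectedSum_12_2_eq_23 hα]

end Transport

theorem zetaTilde23Term_le {α : ℝ} (hα : 0 < α) (p q : ℕ) :
    zetaTilde23Term α p q ≤
      Gamma α / Gamma (2 * α) * (((p : ℝ) + α) ^ 2)⁻¹ * (((q : ℝ) + α) ^ 2)⁻¹ := by
  have hΓ := Gamma_nat_add_div_Gamma_nat_add_le hα (by linarith : α ≤ 2 * α) (p + q + 1)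
  set t : ℝ := ((p + q + 1 : ℕ) : ℝ) with ht
  have htα : 0 < t + α := by positivity
  have hqt : (q : ℝ) + α ≤ t + α := by rw [ht]; push_cast; linarith [p.cast_nonneg (α := ℝ)]
  calc zetaTilde23Term α p q
      = Gamma (t + α) / Gamma (t + 2 * α) * (((p : ℝ) + α) ^ 2)⁻¹ * ((t + α) ^ 2)⁻¹ := by
        rw [zetaTilde23Term, ← ht, Gamma_add_one htα.ne']
        field_simp
    _ ≤ _ := by gcongr

theorem tsum_ofReal_zetaTilde23Term_ne_top {α : ℝ} (hα : 0 < α) :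
    ∑' p : ℕ, ∑' q : ℕ, ENNReal.ofReal (zetaTilde23Term α p q) ≠ ∞ := by
  set r := Gamma α / Gamma (2 * α)
  set u : ℕ → ℝ := fun n => (((n : ℝ) + α) ^ 2)⁻¹
  have hu : ∑' n, ENNReal.ofReal (u n) ≠ ∞ := by
    rw [← ENNReal.ofReal_tsum_of_nonneg (fun n => by positivity) (summable_inv_nat_add_sq hα)]
    exact ENNReal.ofReal_ne_top
  refine ne_top_of_le_ne_top
    (ENNReal.mul_ne_top (ENNReal.mul_ne_top (ENNReal.ofReal_ne_top (r := r)) hu) hu) ?_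
  calc ∑' p : ℕ, ∑' q : ℕ, ENNReal.ofReal (zetaTilde23Term α p q)
      ≤ ∑' p : ℕ, ∑' q : ℕ,
          ENNReal.ofReal r * ENNReal.ofReal (u p) * ENNReal.ofReal (u q) :=
        ENNReal.tsum_le_tsum fun p => ENNReal.tsum_le_tsum fun q => by
          rw [← ENNReal.ofReal_mul (by positivity), ← ENNReal.ofReal_mul (by positivity)]
          exact ENNReal.ofReal_le_ofReal (zetaTilde23Term_le hα p q)
    _ = _ := by simp_rw [ENNReal.tsum_mul_left, ENNReal.tsum_mul_right, ENNReal.tsum_mul_left]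

/-- The duality ζ̃(1,2,2;α) = ζ̃(2,3;α) for the modified parametrized series with factor
Γ(m_r+α+1)/Γ(m_r+2α); triples 0 ≤ m₁ < m₂ < m₃ are parametrized as a, a+b+1, a+b+c+2
and pairs 0 ≤ n₁ < n₂ as a, a+b+1. -/
theorem stmt_12 (α : ℝ) (hα : 0 < α) :
    (∑' a : ℕ, ∑' b : ℕ, ∑' c : ℕ,
        Real.Gamma (((a + b + c + 2 : ℕ) : ℝ) + α + 1) /
            Real.Gamma (((a + b + c + 2 : ℕ) : ℝ) + 2 * α) /
          (((a : ℝ) + α) * (((a + b + 1 : ℕ) : ℝ) + α) ^ 2 *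
            (((a + b + c + 2 : ℕ) : ℝ) + α) ^ 2)) =
      ∑' a : ℕ, ∑' b : ℕ,
        Real.Gamma (((a + b + 1 : ℕ) : ℝ) + α + 1) / Real.Gamma (((a + b + 1 : ℕ) : ℝ) + 2 * α) /
          (((a : ℝ) + α) ^ 2 * (((a + b + 1 : ℕ) : ℝ) + α) ^ 3) := by
  change ∑' a, ∑' b, ∑' c, zetaTilde122Term α a b c = ∑' a, ∑' b, zetaTilde23Term α a b
  have hE := tsum_ofReal_zetaTilde122Term hα
  have hfin := tsum_ofReal_zetaTilde23Term_ne_top hα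
  rw [tsum_tsum_tsum_eq_toReal (fun a b c => by unfold zetaTilde122Term; positivity) (hE ▸ hfin),
    tsum_tsum_eq_toReal (fun a b => by unfold zetaTilde23Term; positivity) hfin, hE]
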